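/- In the model M2, the truth set [R_Ann p] does not belong to the family {[p], [⊥], [¬p], [⊤]}. -/

import Mathlib

/-- Formulas of the language Φ: φ ::= p | ¬φ | φ∨φ | @ₙφ | Rₙφ | Dₙφ,
where `P` is the type of propositional variables and `N` the type of names. -/
inductive Formula (P N : Type) : Type
  | var : P → Formula P N
  | neg : Formula P N → Formula P N
  | disj : Formula P N → Formula P N → Formula P N
  | at_ : N → Formula P N → Formula P N
  | re : N → Formula P N → Formula P N
  | de : N → Formula P N → Formula P N

/-- An epistemic model with extensions. -/
structure Model (P N : Type) where
  W : Type
  A : Type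
  sim : A → W → W → Prop
  sim_equiv : ∀ a, Equivalence (sim a)
  ext : W → N → A
  val : P → Set (W × A)

/-- The satisfaction relation `w, a ⊨ φ`. -/
def Model.sat {P N : Type} (M : Model P N) : Formula P N → M.W → M.A → Prop
  | .var p, w, a => (w, a) ∈ M.val p
  | .neg φ, w, a => ¬ M.sat φ w a
  | .disj φ ψ, w, a => M.sat φ w a ∨ M.sat ψ w a
  | .at_ n φ, w, _ => M.sat φ w (M.ext w n)
  | .re n φ, w, a => ∀ u, M.sim a w u → M.sat φ u (M.ext w n)
  | .de n φ, w, a => ∀ u, M.sim a w u → M.sat φ u (M.ext u n)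

/-- The truth set ⟦φ⟧ of a formula. -/
def Model.truthSet {P N : Type} (M : Model P N) (φ : Formula P N) : Set (M.W × M.A) :=
  {x | M.sat φ x.1 x.2}

/-- The model M2: worlds w=0, u=1; agents a=0, b=1; agent a cannot
distinguish the worlds, agent b can; Ann refers to a in w and b in u;
π(p) = {(w,a),(u,b)}. -/
def M2 : Model Unit Unit where
  W := Fin 2
  A := Fin 2
  sim := fun x s t => x = 0 ∨ s = t
  sim_equiv := fun x =>
    ⟨fun _ => Or.inr rfl, fun h => h.imp id Eq.symm,
     fun h₁ h₂ => by rcases h₁ with h | h <;> rcases h₂ with h' | h' <;> simp_all⟩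
  ext := fun w _ => w
  val := fun _ => {((0 : Fin 2), (0 : Fin 2)), (1, 1)}

/-- The family of truth sets {⟦p⟧, ⟦⊥⟧, ⟦¬p⟧, ⟦⊤⟧} in M2 (⟦⊥⟧ = ∅, ⟦⊤⟧ = W×A). -/
def Fam2 : Set (Set (M2.W × M2.A)) :=
  {M2.truthSet (.var ()), ∅, M2.truthSet (.neg (.var ())), Set.univ}

theorem M2_sat_var (w a : Fin 2) : M2.sat (.var ()) w a ↔ w = a := by
  change (w, a) ∈ ({(0, 0), (1, 1)} : Set (Fin 2 × Fin 2)) ↔ w = a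
  fin_cases w <;> fin_cases a <;> simp

/-- In world `w`, Ann names agent `w`. Agent `a` considers both worlds possible, and no agent
satisfies `p` in both; agent `b` considers only `w`, and `(w, w) ∈ π(p)`. -/
theorem M2_sat_re_var (w a : Fin 2) : M2.sat (.re () (.var ())) w a ↔ a = 1 := by
  change (∀ u : Fin 2, (a = 0 ∨ w = u) → M2.sat (.var ()) u w) ↔ a = 1
  simp only [M2_sat_var]
  fin_cases w <;> fin_cases a <;> decide

/-- In M2, ⟦R_Ann p⟧ ∉ {⟦p⟧, ⟦⊥⟧, ⟦¬p⟧, ⟦⊤⟧}. -/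
theorem re_p_not_in_Fam2 :
    M2.truthSet (.re () (.var ())) ∉ Fam2 := by
  have mem_re (x : Fin 2 × Fin 2) : x ∈ M2.truthSet (.re () (.var ())) ↔ x.2 = 1 :=
    M2_sat_re_var x.1 x.2
  have mem_var (x : Fin 2 × Fin 2) : x ∈ M2.truthSet (.var ()) ↔ x.1 = x.2 :=
    M2_sat_var x.1 x.2
  have mem_re_b (w : Fin 2) : ((w, 1) : Fin 2 × Fin 2) ∈ M2.truthSet (.re () (.var ())) :=
    (mem_re _).mpr rfl
  have not_mem_re_a : ((0, 0) : Fin 2 × Fin 2) ∉ M2.truthSet (.re () (.var ())) :=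
    fun h => absurd ((mem_re _).mp h) (by decide)
  simp only [Fam2, Set.mem_insert_iff, Set.mem_singleton_iff, not_or]
  refine ⟨fun h => ?_, fun h => ?_, fun h => ?_, fun h => ?_⟩ <;> rw [h] at mem_re_b not_mem_re_a
  · exact absurd ((mem_var _).mp (mem_re_b 0)) (by decide)
  · exact mem_re_b 0
  · exact mem_re_b 1 ((mem_var _).mpr rfl)
  · exact not_mem_re_a trivial
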